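/- arXiv:2505.23264 — 2 statements merged into one kernel-verified Lean document; each statement's English description precedes it below -/
import Mathlib

section
/- Let d, N be positive integers, let α, σ be positive real numbers, and let y_1, …, y_N ∈ ℝ^d. For x ∈ ℝ^d define v_i(x) = exp(-‖x - α·y_i‖² / (2σ²)), w_i(x) = v_i(x) / Σ_{j=1}^N v_j(x), and m(x) = Σ_{i=1}^N w_i(x)·y_i. Let F(x) := -∇² log( Σ_{i=1}^N v_i(x) ) be the negative Hessian matrix. Then for every x ∈ ℝ^d, the trace of F(x) equals d/σ² − (α²/σ⁴)·[ Σ_{i=1}^N w_i(x)·‖y_i‖² − ‖m(x)‖² ]. -/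
/-!
With centres `cᵢ = α • yᵢ`, the Gaussian kernels give `∇ log ∑ vᵢ = σ⁻² (m_c - x)`, where
`m_c = ∑ wᵢ cᵢ = α m` is the posterior mean. Differentiating the softmax weights,
`∇wᵢ = σ⁻² wᵢ (cᵢ - m_c)`, so `D m_c = σ⁻² ∑ wᵢ ⟪cᵢ - m_c, ·⟫ cᵢ`, whose trace is the posterior
variance `∑ wᵢ ‖cᵢ‖² - ‖m_c‖²`. Hence `tr ∇² log ∑ vᵢ = σ⁻⁴ (∑ wᵢ ‖cᵢ‖² - ‖m_c‖²) - d σ⁻²`.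
-/

open scoped RealInnerProductSpace
open Finset

noncomputable section

variable {E : Type*} [NormedAddCommGroup E] {ι : Type*} [Fintype ι]

def gaussianKernel (σ : ℝ) (c x : E) : ℝ := Real.exp (-‖x - c‖ ^ 2 / (2 * σ ^ 2))

def gaussianWeight (σ : ℝ) (c : ι → E) (i : ι) (x : E) : ℝ :=
  gaussianKernel σ (c i) x / ∑ j, gaussianKernel σ (c j) x

lemma gaussianKernel_pos (σ : ℝ) (c x : E) : 0 < gaussianKernel σ c x := Real.exp_pos _

lemma sum_gaussianKernel_pos [Nonempty ι] (σ : ℝ) (c : ι → E) (x : E) :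
    0 < ∑ i, gaussianKernel σ (c i) x :=
  sum_pos (fun i _ => gaussianKernel_pos σ (c i) x) univ_nonempty

variable [InnerProductSpace ℝ E]

def gaussianMean (σ : ℝ) (c : ι → E) (x : E) : E := ∑ i, gaussianWeight σ c i x • c i

lemma hasFDerivAt_gaussianKernel (σ : ℝ) (c x : E) :
    HasFDerivAt (gaussianKernel σ c)
      ((gaussianKernel σ c x / σ ^ 2) • innerSL ℝ (c - x)) x := by
  have hinner : HasFDerivAt (fun t => ⟪t - c, t - c⟫) _ x :=
    ((hasFDerivAt_id x).sub_const c).inner ℝ ((hasFDerivAt_id x).sub_const c)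
  have hexp := (hinner.const_mul (-(2 * σ ^ 2)⁻¹)).exp
  have hfun : gaussianKernel σ c = fun t => Real.exp (-(2 * σ ^ 2)⁻¹ * ⟪t - c, t - c⟫) := by
    funext t
    rw [gaussianKernel, real_inner_self_eq_norm_sq]
    ring_nf
  rw [hfun]
  refine hexp.congr_fderiv (ContinuousLinearMap.ext fun u => ?_)
  simp only [smul_apply, ContinuousLinearMap.comp_apply,
    ContinuousLinearMap.prod_apply, ContinuousLinearMap.id_apply, fderivInnerCLM_apply,
    innerSL_apply_apply, smul_eq_mul, id, real_inner_comm u, ← neg_sub x c, inner_neg_right]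
  ring

lemma sum_gaussianKernel_smul_sub [Nonempty ι] (σ : ℝ) (c : ι → E) (x : E) :
    ∑ i, gaussianKernel σ (c i) x • (c i - x) =
      (∑ i, gaussianKernel σ (c i) x) • (gaussianMean σ c x - x) := by
  have hS := (sum_gaussianKernel_pos σ c x).ne'
  simp only [smul_sub, sum_sub_distrib, ← sum_smul, gaussianMean, gaussianWeight, smul_sum,
    smul_smul, mul_div_cancel₀ _ hS]

lemma hasFDerivAt_sum_gaussianKernel [Nonempty ι] (σ : ℝ) (c : ι → E) (x : E) :
    HasFDerivAt (fun x => ∑ i, gaussianKernel σ (c i) x)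
      (((∑ i, gaussianKernel σ (c i) x) / σ ^ 2) • innerSL ℝ (gaussianMean σ c x - x)) x := by
  refine (HasFDerivAt.fun_sum fun i _ => hasFDerivAt_gaussianKernel σ (c i) x).congr_fderiv
    (ContinuousLinearMap.ext fun u => ?_)
  have hsum := congrArg (⟪·, u⟫) (sum_gaussianKernel_smul_sub σ c x)
  simp only [sum_inner, real_inner_smul_left] at hsum
  simp only [_root_.sum_apply, smul_apply, innerSL_apply_apply, smul_eq_mul,
    div_mul_eq_mul_div, ← sum_div, hsum]

lemma hasGradientAt_log_sum_gaussianKernel [Nonempty ι] [CompleteSpace E] (σ : ℝ) (c : ι → E)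
    (x : E) :
    HasGradientAt (fun x => Real.log (∑ i, gaussianKernel σ (c i) x))
      ((σ ^ 2)⁻¹ • (gaussianMean σ c x - x)) x := by
  rw [hasGradientAt_iff_hasFDerivAt]
  have hS := (sum_gaussianKernel_pos σ c x).ne'
  refine ((hasFDerivAt_sum_gaussianKernel σ c x).log hS).congr_fderiv
    (ContinuousLinearMap.ext fun u => ?_)
  simp only [smul_apply, innerSL_apply_apply, InnerProductSpace.toDual_apply_apply,
    real_inner_smul_left, smul_eq_mul]
  field_simp

lemma hasFDerivAt_gaussianWeight [Nonempty ι] (σ : ℝ) (c : ι → E) (i : ι) (x : E) :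
    HasFDerivAt (gaussianWeight σ c i)
      ((gaussianWeight σ c i x / σ ^ 2) • innerSL ℝ (c i - gaussianMean σ c x)) x := by
  have hS := (sum_gaussianKernel_pos σ c x).ne'
  have hinv := (hasDerivAt_inv hS).comp_hasFDerivAt x (hasFDerivAt_sum_gaussianKernel σ c x)
  have hfun : gaussianWeight σ c i =
      fun x => gaussianKernel σ (c i) x * (∑ j, gaussianKernel σ (c j) x)⁻¹ := by
    funext x
    exact div_eq_mul_inv _ _
  rw [hfun]
  refine ((hasFDerivAt_gaussianKernel σ (c i) x).mul hinv).congr_fderiv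
    (ContinuousLinearMap.ext fun u => ?_)
  simp only [add_apply, smul_apply, innerSL_apply_apply, smul_eq_mul, inner_sub_left,
    Function.comp_apply]
  field_simp
  ring

lemma sum_mul_inner_sub_sum_smul (w : ι → ℝ) (c : ι → E) :
    ∑ i, w i * ⟪c i - ∑ j, w j • c j, c i⟫ = ∑ i, w i * ‖c i‖ ^ 2 - ‖∑ j, w j • c j‖ ^ 2 := by
  have hmean : ∑ i, w i * ⟪∑ j, w j • c j, c i⟫ = ‖∑ j, w j • c j‖ ^ 2 := by
    rw [← real_inner_self_eq_norm_sq]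
    simp only [inner_sum, real_inner_smul_right]
  simp only [inner_sub_left, mul_sub, sum_sub_distrib, real_inner_self_eq_norm_sq, hmean]

lemma hasFDerivAt_gaussianMean [Nonempty ι] (σ : ℝ) (c : ι → E) (x : E) :
    HasFDerivAt (gaussianMean σ c)
      (∑ i, ((gaussianWeight σ c i x / σ ^ 2) • innerSL ℝ (c i - gaussianMean σ c x)).smulRight
        (c i)) x :=
  HasFDerivAt.fun_sum fun i _ => (hasFDerivAt_gaussianWeight σ c i x).smul_const (c i)

lemma hasFDerivAt_gradient_log_sum_gaussianKernel [Nonempty ι] [CompleteSpace E] (σ : ℝ)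
    (c : ι → E) (x : E) :
    HasFDerivAt (gradient fun x => Real.log (∑ i, gaussianKernel σ (c i) x))
      ((σ ^ 2)⁻¹ • (∑ i, ((gaussianWeight σ c i x / σ ^ 2) •
        innerSL ℝ (c i - gaussianMean σ c x)).smulRight (c i) - ContinuousLinearMap.id ℝ E)) x := by
  have hgrad : (gradient fun x => Real.log (∑ i, gaussianKernel σ (c i) x)) =
      fun x => (σ ^ 2)⁻¹ • (gaussianMean σ c x - x) :=
    funext fun x => (hasGradientAt_log_sum_gaussianKernel σ c x).gradient
  rw [hgrad]
  exact ((hasFDerivAt_gaussianMean σ c x).sub (hasFDerivAt_id x)).const_smul _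

lemma trace_fderiv_gradient_log_sum_gaussianKernel [Nonempty ι] [FiniteDimensional ℝ E]
    (σ : ℝ) (c : ι → E) (x : E) :
    LinearMap.trace ℝ E (fderiv ℝ (gradient fun x => Real.log (∑ i, gaussianKernel σ (c i) x)) x) =
      (σ ^ 2)⁻¹ * ((σ ^ 2)⁻¹ * (∑ i, gaussianWeight σ c i x * ‖c i‖ ^ 2 - ‖gaussianMean σ c x‖ ^ 2)
        - Module.finrank ℝ E) := by
  have hvar : ∑ i, gaussianWeight σ c i x * ⟪c i - gaussianMean σ c x, c i⟫ =
      ∑ i, gaussianWeight σ c i x * ‖c i‖ ^ 2 - ‖gaussianMean σ c x‖ ^ 2 :=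
    sum_mul_inner_sub_sum_smul _ c
  rw [(hasFDerivAt_gradient_log_sum_gaussianKernel σ c x).fderiv, ← hvar]
  simp only [ContinuousLinearMap.toLinearMap_smul, ContinuousLinearMap.toLinearMap_sub,
    ContinuousLinearMap.toLinearMap_sum, ContinuousLinearMap.coe_smulRight,
    ContinuousLinearMap.toLinearMap_innerSL_apply, ContinuousLinearMap.coe_id, map_smul, map_sub,
    map_sum, LinearMap.trace_smulRight, LinearMap.trace_id, LinearMap.smul_apply,
    LinearMap.sub_apply, innerₛₗ_apply_apply, ← inner_sub_left, smul_eq_mul, mul_sum, div_eq_inv_mul,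
    mul_assoc]

lemma EuclideanSpace.trace_of_apply_single {𝕜 n : Type*} [RCLike 𝕜] [Fintype n] [DecidableEq n]
    (T : EuclideanSpace 𝕜 n →L[𝕜] EuclideanSpace 𝕜 n) :
    (Matrix.of fun k l => T (EuclideanSpace.single l 1) k).trace =
      LinearMap.trace 𝕜 _ (T : EuclideanSpace 𝕜 n →ₗ[𝕜] EuclideanSpace 𝕜 n) :=
  (LinearMap.trace_eq_matrix_trace 𝕜 (EuclideanSpace.basisFun n 𝕜).toBasis _).symm

end

theorem diffusion_fisher_trace_general
    (d N : ℕ) (hN : 0 < N) (α σ : ℝ)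
    (y : Fin N → EuclideanSpace ℝ (Fin d))
    (v w : Fin N → EuclideanSpace ℝ (Fin d) → ℝ)
    (m : EuclideanSpace ℝ (Fin d) → EuclideanSpace ℝ (Fin d))
    (L : EuclideanSpace ℝ (Fin d) → ℝ)
    (F : EuclideanSpace ℝ (Fin d) → Matrix (Fin d) (Fin d) ℝ)
    (hv : ∀ i x, v i x = Real.exp (-‖x - α • y i‖ ^ 2 / (2 * σ ^ 2)))
    (hw : ∀ i x, w i x = v i x / ∑ j, v j x)
    (hm : ∀ x, m x = ∑ i, w i x • y i)
    (hL : ∀ x, L x = Real.log (∑ i, v i x))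
    (hF : ∀ x, F x = -(Matrix.of fun k l =>
        (fderiv ℝ (fun z => gradient L z) x (EuclideanSpace.single l 1)) k)) :
    ∀ x, Matrix.trace (F x) =
      (d : ℝ) / σ ^ 2 -
        (α ^ 2 / σ ^ 4) * ((∑ i, w i x * ‖y i‖ ^ 2) - ‖m x‖ ^ 2) := by
  intro x
  have : Nonempty (Fin N) := Fin.pos_iff_nonempty.mp hN
  have hv' : v = fun i => gaussianKernel σ (α • y i) := funext₂ hv
  have hw' : ∀ i, w i x = gaussianWeight σ (fun i => α • y i) i x := by
    simp [hw, hv', gaussianWeight]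
  have hm' : gaussianMean σ (fun i => α • y i) x = α • m x := by
    simp only [gaussianMean, hm, ← hw', smul_sum, smul_comm α]
  have hL' : L = fun x => Real.log (∑ i, gaussianKernel σ (α • y i) x) := by
    funext x
    rw [hL, hv']
  rw [hF, Matrix.trace_neg, EuclideanSpace.trace_of_apply_single, hL',
    trace_fderiv_gradient_log_sum_gaussianKernel, hm', finrank_euclideanSpace_fin]
  simp only [← hw', norm_smul, mul_pow, Real.norm_eq_abs, sq_abs, mul_left_comm (w _ x), ← mul_sum]
  ring

/-- Proposition 5: the trace of the diffusion Fisher matrix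
`F(x) = -∇² log Σᵢ vᵢ(x)` equals `d/σ² − (α²/σ⁴)·[Σᵢ wᵢ(x)·‖yᵢ‖² − ‖m(x)‖²]`. -/
theorem diffusion_fisher_trace
    (d N : ℕ) (hd : 0 < d) (hN : 0 < N) (α σ : ℝ) (hα : 0 < α) (hσ : 0 < σ)
    (y : Fin N → EuclideanSpace ℝ (Fin d))
    (v w : Fin N → EuclideanSpace ℝ (Fin d) → ℝ)
    (m : EuclideanSpace ℝ (Fin d) → EuclideanSpace ℝ (Fin d))
    (L : EuclideanSpace ℝ (Fin d) → ℝ)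
    (F : EuclideanSpace ℝ (Fin d) → Matrix (Fin d) (Fin d) ℝ)
    (hv : ∀ i x, v i x = Real.exp (-‖x - α • y i‖ ^ 2 / (2 * σ ^ 2)))
    (hw : ∀ i x, w i x = v i x / ∑ j, v j x)
    (hm : ∀ x, m x = ∑ i, w i x • y i)
    (hL : ∀ x, L x = Real.log (∑ i, v i x))
    (hF : ∀ x, F x = -(Matrix.of fun k l =>
        (fderiv ℝ (fun z => gradient L z) x (EuclideanSpace.single l 1)) k)) :
    ∀ x, Matrix.trace (F x) =
      (d : ℝ) / σ ^ 2 -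
        (α ^ 2 / σ ^ 4) * ((∑ i, w i x * ‖y i‖ ^ 2) - ‖m x‖ ^ 2) :=
  diffusion_fisher_trace_general d N hN α σ y v w m L F hv hw hm hL hF
end

section
/- Let d be a positive integer, let α, σ be positive real numbers, and let μ be a probability measure on ℝ^d with finite second moment (∫ ‖y‖² dμ(y) < ∞). For x ∈ ℝ^d define v(x, y) = exp(-‖x − α·y‖² / (2σ²)), V(x) = ∫ v(x, y) dμ(y), and m(x) = (1/V(x))·∫ v(x, y)·y dμ(y). Then V(x) > 0 for all x, the map m : ℝ^d → ℝ^d is differentiable, and its Fréchet derivative at x, viewed as a d×d matrix, equals (α/σ²)·[ (1/V(x))·∫ v(x, y)·y yᵀ dμ(y) − m(x) m(x)ᵀ ]. -/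
/-!
The x-gradient of the Gaussian kernel `v(x, y) = exp (-‖x - α y‖² / (2σ²))` is
`(v / σ²) ⟪α y - x, ·⟫`, and `t exp (-t² / (2σ²)) ≤ σ` bounds its norm by `1 / σ` uniformly in
`x` and `y`. Hence `V` and `∫ v y dμ` can be differentiated under the integral sign, with
dominating functions `1 / σ` and `‖y‖ / σ`. In the quotient rule for `m = V⁻¹ ∫ v y dμ` the
contributions of `-x` cancel, and what remains is `α / σ²` times the posterior covariance
`V⁻¹ ∫ v y yᵀ dμ - m mᵀ`.
-/

open MeasureTheory Real
open scoped RealInnerProductSpace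

lemma mul_exp_neg_sq_div_le {σ : ℝ} (hσ : 0 < σ) (t : ℝ) :
    t * exp (-t ^ 2 / (2 * σ ^ 2)) ≤ σ := by
  have hpoly : t ≤ σ * (t ^ 2 / (2 * σ ^ 2) + 1) := by
    have hgap : σ * (t ^ 2 / (2 * σ ^ 2) + 1) - t = ((t - σ) ^ 2 + σ ^ 2) / (2 * σ) := by
      field_simp; ring
    have : 0 ≤ ((t - σ) ^ 2 + σ ^ 2) / (2 * σ) := by positivity
    linarith
  rw [neg_div, exp_neg, ← div_eq_mul_inv, div_le_iff₀ (exp_pos _)]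
  exact hpoly.trans (mul_le_mul_of_nonneg_left (add_one_le_exp _) hσ.le)

lemma integrable_of_integrable_sq_norm {X F : Type*} [MeasurableSpace X] {μ : Measure X}
    [IsFiniteMeasure μ] [NormedAddCommGroup F] {f : X → F} (hf : AEStronglyMeasurable f μ)
    (h : Integrable (fun x => ‖f x‖ ^ 2) μ) : Integrable f μ :=
  ((memLp_two_iff_integrable_sq_norm hf).2 h).integrable one_le_two

variable {E : Type*} [NormedAddCommGroup E] [InnerProductSpace ℝ E]

lemma inner_integral_left [CompleteSpace E] {X : Type*} [MeasurableSpace X] {μ : Measure X}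
    {f : X → E} (hf : Integrable f μ) (c : E) : ⟪∫ x, f x ∂μ, c⟫ = ∫ x, ⟪f x, c⟫ ∂μ := by
  simpa only [real_inner_comm c] using (integral_inner hf c).symm

noncomputable def gaussKernel (α σ : ℝ) (x y : E) : ℝ :=
  exp (-‖x - α • y‖ ^ 2 / (2 * σ ^ 2))

noncomputable def gaussKernelFDeriv (α σ : ℝ) (x y : E) : E →L[ℝ] ℝ :=
  (gaussKernel α σ x y / σ ^ 2) • innerSL ℝ (α • y - x)

section Kernel

variable {α σ : ℝ} {x y : E}

lemma gaussKernel_pos : 0 < gaussKernel α σ x y := exp_pos _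

lemma gaussKernel_le_one : gaussKernel α σ x y ≤ 1 :=
  exp_le_one_iff.2 <| div_nonpos_of_nonpos_of_nonneg (by simp) (by positivity)

@[fun_prop]
lemma continuous_gaussKernel : Continuous (gaussKernel α σ x) := by
  unfold gaussKernel; fun_prop

@[fun_prop]
lemma continuous_gaussKernelFDeriv : Continuous (gaussKernelFDeriv α σ x) := by
  unfold gaussKernelFDeriv
  exact (continuous_gaussKernel.div_const _).smul ((innerSL ℝ).continuous.comp (by fun_prop))

lemma hasFDerivAt_gaussKernel (hσ : σ ≠ 0) :
    HasFDerivAt (gaussKernel α σ · y) (gaussKernelFDeriv α σ x y) x := by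
  have h := (((hasFDerivAt_id x).sub_const (α • y)).norm_sq.const_mul (-(2 * σ ^ 2)⁻¹)).exp
  convert h using 1
  · ext z; simp only [gaussKernel, id]; ring_nf
  · ext h
    simp only [gaussKernelFDeriv, gaussKernel, map_sub, map_smul, smul_apply, sub_apply,
      coe_innerSL_apply, smul_eq_mul, mul_inv_rev, id_eq, neg_mul, ContinuousLinearMap.comp_id,
      neg_smul, smul_neg, neg_apply, nsmul_eq_mul, Nat.cast_ofNat]
    field_simp
    ring

lemma norm_gaussKernelFDeriv_le (hσ : 0 < σ) : ‖gaussKernelFDeriv α σ x y‖ ≤ σ⁻¹ :=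
  calc ‖gaussKernelFDeriv α σ x y‖ = ‖x - α • y‖ * gaussKernel α σ x y / σ ^ 2 := by
        rw [gaussKernelFDeriv, norm_smul, innerSL_apply_norm,
          Real.norm_of_nonneg (div_nonneg gaussKernel_pos.le (sq_nonneg σ)), norm_sub_rev]
        ring
    _ ≤ σ / σ ^ 2 := by gcongr; exact mul_exp_neg_sq_div_le hσ _
    _ = σ⁻¹ := by field_simp

end Kernel

section Integral

variable [MeasurableSpace E]

/- Up to a constant, `gaussKernel α σ x` is the likelihood of observing `x = α y + σ Z` with
`Z` standard Gaussian, so for a prior `μ` on `y` these are the evidence `V` and the posterior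
mean `m`. -/
noncomputable def evidence (μ : Measure E) (α σ : ℝ) (x : E) : ℝ :=
  ∫ y, gaussKernel α σ x y ∂μ

noncomputable def posteriorMean (μ : Measure E) (α σ : ℝ) (x : E) : E :=
  (evidence μ α σ x)⁻¹ • ∫ y, gaussKernel α σ x y • y ∂μ

variable [BorelSpace E] {μ : Measure E} {α σ : ℝ}

lemma integrable_gaussKernel [IsFiniteMeasure μ] (x : E) : Integrable (gaussKernel α σ x) μ :=
  (integrable_const 1).mono' (by fun_prop) <| .of_forall fun _ => by
    rw [Real.norm_of_nonneg gaussKernel_pos.le]; exact gaussKernel_le_one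

lemma evidence_pos [IsFiniteMeasure μ] [NeZero μ] (x : E) : 0 < evidence μ α σ x :=
  integral_exp_pos (integrable_gaussKernel x)

variable [SecondCountableTopology E]

lemma integrable_gaussKernel_smul (hμ : Integrable (‖·‖) μ) (x : E) :
    Integrable (fun y => gaussKernel α σ x y • y) μ :=
  hμ.mono' (by fun_prop) <| .of_forall fun y => by
    rw [norm_smul, Real.norm_of_nonneg gaussKernel_pos.le]
    exact mul_le_of_le_one_left (norm_nonneg y) gaussKernel_le_one

lemma integrable_gaussKernel_mul_inner_smul (hμ : Integrable (‖·‖ ^ 2) μ) (x h : E) :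
    Integrable (fun y => (gaussKernel α σ x y * ⟪y, h⟫) • y) μ :=
  (hμ.mul_const ‖h‖).mono' (by fun_prop) <| .of_forall fun y =>
    calc ‖(gaussKernel α σ x y * ⟪y, h⟫) • y‖ = gaussKernel α σ x y * (|⟪y, h⟫| * ‖y‖) := by
          rw [norm_smul, norm_mul, Real.norm_of_nonneg gaussKernel_pos.le, Real.norm_eq_abs,
            mul_assoc]
      _ ≤ 1 * (‖y‖ * ‖h‖ * ‖y‖) := by
          gcongr
          · exact gaussKernel_le_one
          · exact abs_real_inner_le_norm y h
      _ = ‖y‖ ^ 2 * ‖h‖ := by ring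

lemma integrable_gaussKernelFDeriv_smulRight (hσ : 0 < σ) (hμ : Integrable (‖·‖) μ) (x : E) :
    Integrable (fun y => (gaussKernelFDeriv α σ x y).smulRight y) μ :=
  (hμ.const_mul σ⁻¹).mono' (by fun_prop) <| .of_forall fun y => by
    rw [ContinuousLinearMap.norm_smulRight_apply]
    exact mul_le_mul_of_nonneg_right (norm_gaussKernelFDeriv_le hσ) (norm_nonneg y)

lemma hasFDerivAt_integral_gaussKernel_smul (hσ : 0 < σ) (hμ : Integrable (‖·‖) μ) (x : E) :
    HasFDerivAt (fun x => ∫ y, gaussKernel α σ x y • y ∂μ)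
      (∫ y, (gaussKernelFDeriv α σ x y).smulRight y ∂μ) x :=
  hasFDerivAt_integral_of_dominated_of_fderiv_le (F := fun x y => gaussKernel α σ x y • y)
    (F' := fun x y => (gaussKernelFDeriv α σ x y).smulRight y) (bound := fun y => σ⁻¹ * ‖y‖)
    Filter.univ_mem
    (.of_forall fun _ => (integrable_gaussKernel_smul hμ _).aestronglyMeasurable)
    (integrable_gaussKernel_smul hμ x)
    (integrable_gaussKernelFDeriv_smulRight hσ hμ x).aestronglyMeasurable
    (.of_forall fun y _ _ => by
      rw [ContinuousLinearMap.norm_smulRight_apply]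
      exact mul_le_mul_of_nonneg_right (norm_gaussKernelFDeriv_le hσ) (norm_nonneg y))
    (hμ.const_mul _)
    (.of_forall fun y _ _ => (hasFDerivAt_gaussKernel hσ.ne').smul_const y)

variable [IsFiniteMeasure μ]

lemma integrable_gaussKernelFDeriv (hσ : 0 < σ) (x : E) :
    Integrable (gaussKernelFDeriv α σ x) μ :=
  (integrable_const σ⁻¹).mono' (by fun_prop) <| .of_forall fun _ => norm_gaussKernelFDeriv_le hσ

lemma hasFDerivAt_evidence (hσ : 0 < σ) (x : E) :
    HasFDerivAt (evidence μ α σ) (∫ y, gaussKernelFDeriv α σ x y ∂μ) x :=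
  hasFDerivAt_integral_of_dominated_of_fderiv_le (F := gaussKernel α σ) (bound := fun _ => σ⁻¹)
    Filter.univ_mem
    (.of_forall fun _ => (integrable_gaussKernel _).aestronglyMeasurable)
    (integrable_gaussKernel x) (integrable_gaussKernelFDeriv hσ x).aestronglyMeasurable
    (.of_forall fun _ _ _ => norm_gaussKernelFDeriv_le hσ) (integrable_const _)
    (.of_forall fun _ _ _ => hasFDerivAt_gaussKernel hσ.ne')

lemma integral_gaussKernelFDeriv_smulRight_apply (hσ : 0 < σ) (hμ : Integrable (‖·‖ ^ 2) μ)
    (x h : E) :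
    (∫ y, (gaussKernelFDeriv α σ x y).smulRight y ∂μ) h =
      (σ ^ 2)⁻¹ • (α • ∫ y, (gaussKernel α σ x y * ⟪y, h⟫) • y ∂μ -
        ⟪x, h⟫ • ∫ y, gaussKernel α σ x y • y ∂μ) := by
  have hμ1 : Integrable (‖·‖) μ :=
    (integrable_of_integrable_sq_norm aestronglyMeasurable_id hμ).norm
  have hpt : ∀ y, (gaussKernelFDeriv α σ x y).smulRight y h =
      (σ ^ 2)⁻¹ • (α • (gaussKernel α σ x y * ⟪y, h⟫) • y - ⟪x, h⟫ • gaussKernel α σ x y • y) :=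
    fun y => by
      simp only [ContinuousLinearMap.smulRight_apply, gaussKernelFDeriv, FunLike.coe_smul,
        Pi.smul_apply, innerSL_apply_apply, inner_sub_left, inner_smul_left, smul_eq_mul,
        RCLike.conj_to_real]
      module
  rw [ContinuousLinearMap.integral_apply (integrable_gaussKernelFDeriv_smulRight hσ hμ1 x)]
  simp_rw [hpt]
  rw [integral_smul, integral_sub, integral_smul, integral_smul]
  exacts [(integrable_gaussKernel_mul_inner_smul hμ x h).smul α,
    (integrable_gaussKernel_smul hμ1 x).smul _]

lemma hasFDerivAt_posteriorMean [NeZero μ] (hσ : 0 < σ) (hμ : Integrable (‖·‖) μ) (x : E) :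
    HasFDerivAt (posteriorMean μ α σ) ((evidence μ α σ x)⁻¹ •
        ∫ y, (gaussKernelFDeriv α σ x y).smulRight y ∂μ +
      (-(evidence μ α σ x ^ 2)⁻¹ • ∫ y, gaussKernelFDeriv α σ x y ∂μ).smulRight
        (∫ y, gaussKernel α σ x y • y ∂μ)) x :=
  ((hasDerivAt_inv (evidence_pos x).ne').comp_hasFDerivAt x (hasFDerivAt_evidence hσ x)).smul
    (hasFDerivAt_integral_gaussKernel_smul hσ hμ x)

variable [CompleteSpace E]

lemma integral_gaussKernelFDeriv_apply (hσ : 0 < σ) (hμ : Integrable (‖·‖) μ) (x h : E) :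
    (∫ y, gaussKernelFDeriv α σ x y ∂μ) h =
      (α * ⟪∫ y, gaussKernel α σ x y • y ∂μ, h⟫ - ⟪x, h⟫ * evidence μ α σ x) / σ ^ 2 := by
  have hpt : ∀ y, gaussKernelFDeriv α σ x y h =
      (α * ⟪gaussKernel α σ x y • y, h⟫ - ⟪x, h⟫ * gaussKernel α σ x y) / σ ^ 2 := fun y => by
    simp only [gaussKernelFDeriv, FunLike.coe_smul, Pi.smul_apply, innerSL_apply_apply,
      inner_sub_left, inner_smul_left, smul_eq_mul, RCLike.conj_to_real]
    ring
  rw [ContinuousLinearMap.integral_apply (integrable_gaussKernelFDeriv hσ x)]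
  simp_rw [hpt]
  rw [integral_div, integral_sub, integral_const_mul, integral_const_mul, evidence]
  · rw [inner_integral_left (integrable_gaussKernel_smul hμ x)]
  exacts [((integrable_gaussKernel_smul hμ x).inner_const h).const_mul α,
    (integrable_gaussKernel x).const_mul _]

lemma fderiv_posteriorMean_apply [NeZero μ] (hσ : 0 < σ) (hμ : Integrable (‖·‖ ^ 2) μ)
    (x h : E) :
    fderiv ℝ (posteriorMean μ α σ) x h = (α / σ ^ 2) • ((evidence μ α σ x)⁻¹ •
      ∫ y, (gaussKernel α σ x y * ⟪y, h⟫) • y ∂μ -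
        ⟪posteriorMean μ α σ x, h⟫ • posteriorMean μ α σ x) := by
  have hμ1 : Integrable (‖·‖) μ :=
    (integrable_of_integrable_sq_norm aestronglyMeasurable_id hμ).norm
  rw [(hasFDerivAt_posteriorMean hσ hμ1 x).fderiv]
  simp only [add_apply, ContinuousLinearMap.smulRight_apply, FunLike.coe_smul, Pi.smul_apply,
    integral_gaussKernelFDeriv_smulRight_apply hσ hμ, integral_gaussKernelFDeriv_apply hσ hμ1,
    posteriorMean, inner_smul_left, RCLike.conj_to_real, smul_eq_mul]
  have hV : evidence μ α σ x ≠ 0 := (evidence_pos x).ne'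
  have hσ0 : σ ≠ 0 := hσ.ne'
  match_scalars <;> field_simp
  ring

lemma inner_fderiv_posteriorMean_apply [NeZero μ] (hσ : 0 < σ) (hμ : Integrable (‖·‖ ^ 2) μ)
    (x h h' : E) :
    ⟪fderiv ℝ (posteriorMean μ α σ) x h, h'⟫ = α / σ ^ 2 * ((evidence μ α σ x)⁻¹ *
      ∫ y, gaussKernel α σ x y * (⟪y, h'⟫ * ⟪y, h⟫) ∂μ -
        ⟪posteriorMean μ α σ x, h'⟫ * ⟪posteriorMean μ α σ x, h⟫) := by
  rw [fderiv_posteriorMean_apply hσ hμ, real_inner_smul_left, inner_sub_left,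
    real_inner_smul_left, real_inner_smul_left,
    inner_integral_left (integrable_gaussKernel_mul_inner_smul hμ x h)]
  have hpt : ∀ y, ⟪(gaussKernel α σ x y * ⟪y, h⟫) • y, h'⟫ =
      gaussKernel α σ x y * (⟪y, h'⟫ * ⟪y, h⟫) := fun y => by
    rw [real_inner_smul_left]; ring
  simp_rw [hpt]
  ring

end Integral

theorem jacobian_posterior_mean_general_general
    (d : ℕ) (α σ : ℝ) (hσ : 0 < σ)
    (μ : Measure (EuclideanSpace ℝ (Fin d))) [IsProbabilityMeasure μ]
    (hmom : Integrable (fun y => ‖y‖ ^ 2) μ)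
    (v : EuclideanSpace ℝ (Fin d) → EuclideanSpace ℝ (Fin d) → ℝ)
    (V : EuclideanSpace ℝ (Fin d) → ℝ)
    (m : EuclideanSpace ℝ (Fin d) → EuclideanSpace ℝ (Fin d))
    (hv : ∀ x y, v x y = Real.exp (-‖x - α • y‖ ^ 2 / (2 * σ ^ 2)))
    (hV : ∀ x, V x = ∫ y, v x y ∂μ)
    (hm : ∀ x, m x = (V x)⁻¹ • ∫ y, v x y • y ∂μ) :
    (∀ x, 0 < V x) ∧ Differentiable ℝ m ∧
      ∀ x, (Matrix.of fun k l => (fderiv ℝ m x (EuclideanSpace.single l 1)) k) =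
        Matrix.of fun k l => (α / σ ^ 2) *
          ((V x)⁻¹ * (∫ y, v x y * (y k * y l) ∂μ) - m x k * m x l) := by
  obtain rfl : v = gaussKernel α σ := funext₂ hv
  obtain rfl : V = evidence μ α σ := funext hV
  obtain rfl : m = posteriorMean μ α σ := funext hm
  have hμ : Integrable (‖·‖) μ :=
    (integrable_of_integrable_sq_norm aestronglyMeasurable_id hmom).norm
  refine ⟨evidence_pos, fun x => (hasFDerivAt_posteriorMean hσ hμ x).differentiableAt,
    fun x => ?_⟩
  ext k l
  simpa [EuclideanSpace.inner_single_right] using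
    inner_fderiv_posteriorMean_apply hσ hmom x (EuclideanSpace.single l 1)
      (EuclideanSpace.single k 1)

/-- general setting: the Jacobian of the posterior mean
`m(x) = (1/V(x))·∫ v(x,y)·y dμ(y)` equals
`(α/σ²)·[(1/V(x))·∫ v(x,y)·yyᵀ dμ(y) − m(x)m(x)ᵀ]`, entrywise. -/
theorem jacobian_posterior_mean_general
    (d : ℕ) (hd : 0 < d) (α σ : ℝ) (hα : 0 < α) (hσ : 0 < σ)
    (μ : Measure (EuclideanSpace ℝ (Fin d))) [IsProbabilityMeasure μ]
    (hmom : Integrable (fun y => ‖y‖ ^ 2) μ)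
    (v : EuclideanSpace ℝ (Fin d) → EuclideanSpace ℝ (Fin d) → ℝ)
    (V : EuclideanSpace ℝ (Fin d) → ℝ)
    (m : EuclideanSpace ℝ (Fin d) → EuclideanSpace ℝ (Fin d))
    (hv : ∀ x y, v x y = Real.exp (-‖x - α • y‖ ^ 2 / (2 * σ ^ 2)))
    (hV : ∀ x, V x = ∫ y, v x y ∂μ)
    (hm : ∀ x, m x = (V x)⁻¹ • ∫ y, v x y • y ∂μ) :
    (∀ x, 0 < V x) ∧ Differentiable ℝ m ∧
      ∀ x, (Matrix.of fun k l => (fderiv ℝ m x (EuclideanSpace.single l 1)) k) =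
        Matrix.of fun k l => (α / σ ^ 2) *
          ((V x)⁻¹ * (∫ y, v x y * (y k * y l) ∂μ) - m x k * m x l) :=
  jacobian_posterior_mean_general_general d α σ hσ μ hmom v V m hv hV hm
end
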